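/- arXiv:0707.2792 — 5 statements merged into one kernel-verified Lean document; each statement's English description precedes it below -/
import Mathlib

section
/- Let C be a superadditive (supermodular) function from subsets of {1,…,m} to ℝ with C(∅) = 0, and let π be a permutation of {1,…,m}. Define the corner point q_π ∈ ℝ^m by (q_π)_{π(i)} := C({π(i),π(i+1),…,π(m)}) − C({π(i+1),…,π(m)}) for 1 ≤ i ≤ m. Then q_π lies in the polyhedron P_H, i.e., ∑_{k∈K} (q_π)_k ≥ C(K) for every subset K ⊆ {1,…,m}; moreover equality holds whenever K is a tail set {π(i),π(i+1),…,π(m)} for some i. -/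
open scoped BigOperators

/-- The corner point of a supermodular set function C associated to a permutation π:
its π(i)-th coordinate is C({π(i),…,π(m)}) − C({π(i+1),…,π(m)}). Positions are encoded
0-based: the tail {π(i),…,π(m)} is the image under π of the positions j with i ≤ j. -/
noncomputable def cornerPoint {m : ℕ} (C : Finset (Fin m) → ℝ) (π : Equiv.Perm (Fin m)) :
    Fin m → ℝ :=
  fun k => C ((Finset.univ.filter (fun j : Fin m => π.symm k ≤ j)).image π)
    - C ((Finset.univ.filter (fun j : Fin m => π.symm k < j)).image π)

/-- Auxiliary: the tail set at position `n` (a natural number). -/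
noncomputable def tailSet {m : ℕ} (π : Equiv.Perm (Fin m)) (n : ℕ) : Finset (Fin m) :=
  (Finset.univ.filter (fun j : Fin m => n ≤ j.val)).image π

lemma mem_tailSet {m : ℕ} (π : Equiv.Perm (Fin m)) {n : ℕ} {k : Fin m} :
    k ∈ tailSet π n ↔ n ≤ (π.symm k).val := by
  simp only [tailSet, Finset.mem_image, Finset.mem_filter, Finset.mem_univ, true_and]
  constructor
  · rintro ⟨j, hj, rfl⟩; simpa using hj
  · intro h; exact ⟨π.symm k, h, by simp⟩

lemma tailSet_top {m : ℕ} (π : Equiv.Perm (Fin m)) : tailSet π m = ∅ := by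
  ext k
  simp only [mem_tailSet, Finset.notMem_empty, iff_false]
  exact Nat.not_le.mpr (π.symm k).isLt

lemma tailSet_zero {m : ℕ} (π : Equiv.Perm (Fin m)) : tailSet π 0 = Finset.univ := by
  ext k; simp [mem_tailSet]

lemma notMem_tailSet_succ {m : ℕ} (π : Equiv.Perm (Fin m)) {n : ℕ} (h : n < m) :
    π ⟨n, h⟩ ∉ tailSet π (n + 1) := by
  simp [mem_tailSet]

lemma tailSet_eq_insert {m : ℕ} (π : Equiv.Perm (Fin m)) {n : ℕ} (h : n < m) :
    tailSet π n = insert (π ⟨n, h⟩) (tailSet π (n + 1)) := by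
  ext k
  simp only [mem_tailSet, Finset.mem_insert]
  constructor
  · intro hk
    rcases eq_or_lt_of_le hk with hk' | hk'
    · left
      have : π.symm k = ⟨n, h⟩ := Fin.ext hk'.symm
      rw [← this]; simp
    · right; omega
  · rintro (rfl | hk)
    · simp
    · omega

lemma cornerPoint_eq {m : ℕ} (C : Finset (Fin m) → ℝ) (π : Equiv.Perm (Fin m)) (k : Fin m) :
    cornerPoint C π k
      = C (tailSet π (π.symm k).val) - C (tailSet π ((π.symm k).val + 1)) := by
  unfold cornerPoint tailSet
  simp only [Fin.le_def, Fin.lt_def, Nat.lt_iff_add_one_le]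

lemma cornerPoint_apply {m : ℕ} (C : Finset (Fin m) → ℝ) (π : Equiv.Perm (Fin m))
    {n : ℕ} (h : n < m) :
    cornerPoint C π (π ⟨n, h⟩) = C (tailSet π n) - C (tailSet π (n + 1)) := by
  rw [cornerPoint_eq]; simp

lemma tail_sum_eq {m : ℕ} (C : Finset (Fin m) → ℝ) (h0 : C ∅ = 0)
    (π : Equiv.Perm (Fin m)) :
    ∀ d n : ℕ, n + d = m →
      ∑ k ∈ tailSet π n, cornerPoint C π k = C (tailSet π n) := by
  intro d
  induction d with
  | zero =>
    intro n hn
    subst hn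
    simp [tailSet_top, h0]
  | succ d ih =>
    intro n hn
    have hnm : n < m := by omega
    rw [tailSet_eq_insert π hnm,
      Finset.sum_insert (notMem_tailSet_succ π hnm),
      cornerPoint_apply C π hnm, ih (n + 1) (by omega),
      ← tailSet_eq_insert π hnm]
    ring

lemma key_ineq {m : ℕ} (C : Finset (Fin m) → ℝ)
    (hsup : ∀ K L : Finset (Fin m), C K + C L ≤ C (K ∪ L) + C (K ∩ L))
    (h0 : C ∅ = 0) (π : Equiv.Perm (Fin m)) :
    ∀ d n : ℕ, n + d = m → ∀ K : Finset (Fin m),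
      C (K ∩ tailSet π n) ≤ ∑ k ∈ K ∩ tailSet π n, cornerPoint C π k := by
  intro d
  induction d with
  | zero =>
    intro n hn K
    subst hn
    simp [tailSet_top, h0]
  | succ d ih =>
    intro n hn K
    have hnm : n < m := by omega
    set a := π ⟨n, hnm⟩ with ha
    have hins := tailSet_eq_insert π hnm
    have hnotmem := notMem_tailSet_succ π hnm
    by_cases hK : a ∈ K
    · have hset : K ∩ tailSet π n = insert a (K ∩ tailSet π (n + 1)) := by
        rw [hins, Finset.inter_insert_of_mem hK]
      have hsum : ∑ k ∈ K ∩ tailSet π n, cornerPoint C π k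
          = cornerPoint C π a + ∑ k ∈ K ∩ tailSet π (n + 1), cornerPoint C π k := by
        rw [hset, Finset.sum_insert (by
          intro hmem
          exact hnotmem (Finset.mem_of_mem_inter_right hmem))]
      have hunion : (K ∩ tailSet π n) ∪ tailSet π (n + 1) = tailSet π n := by
        apply Finset.Subset.antisymm
        · apply Finset.union_subset (Finset.inter_subset_right)
          rw [hins]; exact Finset.subset_insert _ _
        · rw [hins]
          intro x hx
          rcases Finset.mem_insert.mp hx with rfl | hx
          · exact Finset.mem_union_left _
              (Finset.mem_inter.mpr ⟨hK, Finset.mem_insert_self _ _⟩)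
          · exact Finset.mem_union_right _ hx
      have hinter : (K ∩ tailSet π n) ∩ tailSet π (n + 1) = K ∩ tailSet π (n + 1) := by
        rw [Finset.inter_assoc]
        congr 1
        rw [hins]
        exact Finset.inter_eq_right.mpr (Finset.subset_insert _ _)
      have h1 := hsup (K ∩ tailSet π n) (tailSet π (n + 1))
      rw [hunion, hinter] at h1
      have h2 := ih (n + 1) (by omega) K
      have h3 : cornerPoint C π a = C (tailSet π n) - C (tailSet π (n + 1)) :=
        cornerPoint_apply C π hnm
      rw [hsum]
      linarith
    · have hset : K ∩ tailSet π n = K ∩ tailSet π (n + 1) := by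
        rw [hins, Finset.inter_insert_of_notMem hK]
      rw [hset]
      exact ih (n + 1) (by omega) K

/-- Each corner point q_π of a supermodular set function C with C(∅) = 0 lies in the
polyhedron P_H = {Q : ∑_{k∈K} Q_k ≥ C(K) for all K}, and it saturates the inequalities
for all the tail sets {π(i),…,π(m)}. -/
theorem cornerPoint_mem_PH {m : ℕ} (C : Finset (Fin m) → ℝ)
    (hsup : ∀ K L : Finset (Fin m), C K + C L ≤ C (K ∪ L) + C (K ∩ L))
    (h0 : C ∅ = 0) (π : Equiv.Perm (Fin m)) :
    (∀ K : Finset (Fin m), C K ≤ ∑ k ∈ K, cornerPoint C π k) ∧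
    (∀ i : Fin m,
      ∑ k ∈ (Finset.univ.filter (fun j : Fin m => i ≤ j)).image π, cornerPoint C π k
        = C ((Finset.univ.filter (fun j : Fin m => i ≤ j)).image π)) := by
  constructor
  · intro K
    have := key_ineq C hsup h0 π m 0 (by omega) K
    rwa [tailSet_zero, Finset.inter_univ] at this
  · intro i
    have hset : (Finset.univ.filter (fun j : Fin m => i ≤ j)).image π
        = tailSet π i.val := by
      unfold tailSet
      simp only [Fin.le_def]
    rw [hset]
    exact tail_sum_eq C h0 π (m - i.val) i.val (by omega)
end

section
/- Let C be a superadditive (supermodular) function from subsets of {1,…,m} to ℝ. Let L_1,…,L_m ⊆ {1,…,m} be such that the linear system ∑_{k∈L_i} Q_k = C(L_i) (i = 1,…,m) has a unique solution Q̄ ∈ ℝ^m, and suppose Q̄ also satisfies ∑_{k∈K} Q̄_k ≥ C(K) for every subset K ⊆ {1,…,m}. Then there exists a maximal chain of subsets ∅ = K_0 ⊂ K_1 ⊂ K_2 ⊂ … ⊂ K_m = {1,…,m} (with |K_i| = i) such that ∑_{k∈K_i} Q̄_k = C(K_i) for every i = 1,…,m. -/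
open scoped BigOperators

/-- Existence of a maximal chain: if C is supermodular, Q̄ is the unique solution of the
linear system ∑_{k∈L_i} Q_k = C(L_i) (i = 1,…,m), and Q̄ satisfies all the inequalities
∑_{k∈K} Q̄_k ≥ C(K), then there is a maximal chain ∅ = K_0 ⊂ K_1 ⊂ ⋯ ⊂ K_m = {1,…,m}
(with |K_i| = i) all of whose inequalities are saturated by Q̄. -/
theorem maximal_chain_exists {m : ℕ} (C : Finset (Fin m) → ℝ)
    (hsup : ∀ K L : Finset (Fin m), C K + C L ≤ C (K ∪ L) + C (K ∩ L))
    (L : Fin m → Finset (Fin m)) (Qbar : Fin m → ℝ)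
    (hsol : ∀ i, ∑ k ∈ L i, Qbar k = C (L i))
    (huniq : ∀ Q : Fin m → ℝ, (∀ i, ∑ k ∈ L i, Q k = C (L i)) → Q = Qbar)
    (hfeas : ∀ K : Finset (Fin m), C K ≤ ∑ k ∈ K, Qbar k) :
    ∃ Kc : Fin (m + 1) → Finset (Fin m),
      Kc 0 = ∅ ∧ Kc (Fin.last m) = Finset.univ ∧
      (∀ i : Fin m, Kc i.castSucc ⊂ Kc i.succ) ∧
      (∀ i : Fin (m + 1), (Kc i).card = (i : ℕ)) ∧
      (∀ i : Fin (m + 1), 1 ≤ (i : ℕ) → ∑ k ∈ Kc i, Qbar k = C (Kc i)) := by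
  classical
  set T : Finset (Fin m) → Prop := fun K => ∑ k ∈ K, Qbar k = C K with hTdef
  -- tight sets closed under union and intersection
  have hclose : ∀ K K' : Finset (Fin m), T K → T K' → T (K ∪ K') ∧ T (K ∩ K') := by
    intro K K' hK hK'
    have h1 := hsup K K'
    have h2 := hfeas (K ∪ K')
    have h3 := hfeas (K ∩ K')
    have hsum : ∑ k ∈ K ∪ K', Qbar k + ∑ k ∈ K ∩ K', Qbar k
        = ∑ k ∈ K, Qbar k + ∑ k ∈ K', Qbar k := Finset.sum_union_inter
    simp only [hTdef] at hK hK' ⊢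
    constructor <;> linarith
  -- every element is in some L i
  have hmem : ∀ x : Fin m, ∃ i, x ∈ L i := by
    intro x
    by_contra h
    push_neg at h
    have hq := huniq (fun k => Qbar k + if k = x then 1 else 0) (by
      intro i
      rw [Finset.sum_add_distrib, Finset.sum_ite_eq' (L i) x (fun _ => (1:ℝ))]
      simp [h i, hsol i])
    have := congrFun hq x
    simp at this
  -- separation: no two distinct elements are in exactly the same L i's
  have hsep : ∀ x y : Fin m, x ≠ y → (∀ i, x ∈ L i ↔ y ∈ L i) → False := by
    intro x y hxy hiff
    have hq := huniq (fun k => Qbar k + ((if k = x then 1 else 0) - (if k = y then 1 else 0))) (by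
      intro i
      rw [Finset.sum_add_distrib, Finset.sum_sub_distrib,
        Finset.sum_ite_eq' (L i) x (fun _ => (1:ℝ)),
        Finset.sum_ite_eq' (L i) y (fun _ => (1:ℝ))]
      by_cases hx : x ∈ L i
      · have hy : y ∈ L i := (hiff i).mp hx
        simp [hx, hy, hsol i]
      · have hy : y ∉ L i := fun hy => hx ((hiff i).mpr hy)
        simp [hx, hy, hsol i])
    have := congrFun hq x
    simp [hxy] at this
  -- the step lemma
  have hstep : ∀ A : Finset (Fin m), (A = ∅ ∨ T A) → A.card < m →
      ∃ B, T B ∧ A ⊂ B ∧ B.card = A.card + 1 := by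
    intro A hA hAcard
    have hTu : ∀ W, T W → T (A ∪ W) := by
      intro W hW
      rcases hA with rfl | hA
      · simpa using hW
      · exact (hclose A W hA hW).1
    -- there is a tight strict superset of A
    have hexists : ∃ B, T B ∧ A ⊂ B := by
      obtain ⟨x, hxA⟩ : ∃ x, x ∉ A := by
        by_contra h
        push_neg at h
        have : A = Finset.univ := Finset.eq_univ_iff_forall.mpr h
        rw [this] at hAcard
        simp at hAcard
      obtain ⟨i0, hi0⟩ := hmem x
      exact ⟨A ∪ L i0, hTu _ (hsol i0),
        Finset.ssubset_iff_of_subset Finset.subset_union_left |>.mpr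
          ⟨x, Finset.mem_union_right _ hi0, hxA⟩⟩
    -- take one of minimal cardinality
    set S : Finset (Finset (Fin m)) := Finset.univ.filter (fun B => T B ∧ A ⊂ B) with hSdef
    have hSne : S.Nonempty := by
      obtain ⟨B, hB1, hB2⟩ := hexists
      exact ⟨B, Finset.mem_filter.mpr ⟨Finset.mem_univ _, hB1, hB2⟩⟩
    obtain ⟨B, hBS, hBmin⟩ := S.exists_min_image Finset.card hSne
    rw [hSdef, Finset.mem_filter] at hBS
    obtain ⟨-, hTB, hAB⟩ := hBS
    refine ⟨B, hTB, hAB, ?_⟩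
    have hcard_lt : A.card < B.card := Finset.card_lt_card hAB
    by_contra hne
    have h2 : 1 < (B \ A).card := by
      rw [Finset.card_sdiff_of_subset hAB.subset]
      omega
    obtain ⟨x, hxmem, y, hymem, hxy⟩ := Finset.one_lt_card.mp h2
    rw [Finset.mem_sdiff] at hxmem hymem
    refine hsep x y hxy (fun i => ?_)
    have hT' : T ((A ∪ L i) ∩ B) := (hclose _ _ (hTu _ (hsol i)) hTB).2
    have hsub1 : A ⊆ (A ∪ L i) ∩ B :=
      Finset.subset_inter Finset.subset_union_left hAB.subset
    have hsub2 : (A ∪ L i) ∩ B ⊆ B := Finset.inter_subset_right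
    have hcases : (A ∪ L i) ∩ B = A ∨ (A ∪ L i) ∩ B = B := by
      by_cases h : (A ∪ L i) ∩ B = A
      · exact Or.inl h
      · right
        have hmemS : (A ∪ L i) ∩ B ∈ S := by
          rw [hSdef, Finset.mem_filter]
          exact ⟨Finset.mem_univ _, hT', hsub1.ssubset_of_ne (Ne.symm h)⟩
        exact Finset.eq_of_subset_of_card_le hsub2 (hBmin _ hmemS)
    have hx' : x ∈ (A ∪ L i) ∩ B ↔ x ∈ L i := by
      simp [Finset.mem_inter, Finset.mem_union, hxmem.1, hxmem.2]
    have hy' : y ∈ (A ∪ L i) ∩ B ↔ y ∈ L i := by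
      simp [Finset.mem_inter, Finset.mem_union, hymem.1, hymem.2]
    rcases hcases with h | h
    · rw [h] at hx' hy'
      simp [hxmem.2, hymem.2] at hx' hy'
      simp [hx', hy']
    · rw [h] at hx' hy'
      simp [hxmem.1, hymem.1] at hx' hy'
      simp [hx', hy']
  -- build the chain by induction
  have hchain : ∀ n, n ≤ m → ∃ g : ℕ → Finset (Fin m),
      g 0 = ∅ ∧ (∀ k, k ≤ n → (g k).card = k) ∧
      (∀ k, k < n → g k ⊂ g (k+1)) ∧
      (∀ k, 1 ≤ k → k ≤ n → T (g k)) := by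
    intro n
    induction n with
    | zero =>
      intro _
      exact ⟨fun _ => ∅, rfl, fun k hk => by simp [Nat.le_zero.mp hk],
        fun k hk => absurd hk (by omega), fun k h1 h2 => absurd (h1.trans h2) (by omega)⟩
    | succ p ih =>
      intro hp
      obtain ⟨g, hg0, hgcard, hgchain, hgT⟩ := ih (by omega)
      have hAp : g p = ∅ ∨ T (g p) := by
        rcases Nat.eq_zero_or_pos p with rfl | hpos
        · exact Or.inl hg0
        · exact Or.inr (hgT p hpos le_rfl)
      obtain ⟨B, hTB, hAB, hBcard⟩ := hstep (g p) hAp (by rw [hgcard p le_rfl]; omega)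
      refine ⟨fun k => if k = p + 1 then B else g k, by simp [hg0], ?_, ?_, ?_⟩
      · intro k hk
        by_cases h : k = p + 1
        · subst h; simp [hBcard, hgcard p le_rfl]
        · simp [h, hgcard k (by omega)]
      · intro k hk
        show (if k = p + 1 then B else g k) ⊂ (if k + 1 = p + 1 then B else g (k + 1))
        by_cases h : k = p
        · rw [if_neg (by omega), if_pos (by omega), h]
          exact hAB
        · rw [if_neg (by omega), if_neg (by omega)]
          exact hgchain k (by omega)
      · intro k hk1 hk2
        by_cases h : k = p + 1
        · subst h; simpa using hTB
        · simp only [if_neg h]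
          exact hgT k hk1 (by omega)
  obtain ⟨g, hg0, hgcard, hgchain, hgT⟩ := hchain m le_rfl
  refine ⟨fun i => g i, by simpa using hg0, ?_, ?_, ?_, ?_⟩
  · apply Finset.eq_univ_of_card
    show (g m).card = Fintype.card (Fin m)
    rw [hgcard m le_rfl, Fintype.card_fin]
  · intro i
    simpa using hgchain i i.isLt
  · intro i
    exact hgcard i (by omega)
  · intro i hi
    exact hgT i hi (by omega)
end

section
/- Let C be a superadditive (supermodular) function from subsets of {1,…,m} to ℝ with C(∅) = 0. Then the polyhedron P_H = {Q ∈ ℝ^m : ∑_{k∈K} Q_k ≥ C(K) for every nonempty K ⊆ {1,…,m}} equals the Minkowski sum of the convex hull of the set of corner points {q_π : π a permutation of {1,…,m}} and the nonnegative orthant {w ∈ ℝ^m : w_k ≥ 0 for all k}. -/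
open scoped BigOperators

/-!
Every corner point lies in `P_H`: telescoping `C K` along the chain of suffixes
`{π i, …, π (m-1)}` and applying supermodularity at each step bounds `C K` by
`∑ k ∈ K, q_π k`. As `P_H` is convex and upward closed, it contains
`conv {q_π} + ℝ^m_{≥0}`. That set is closed and convex, so a point `Q ∈ P_H` outside it is
strictly separated from it by a functional `c`, which is nonnegative because the set is upward
closed. Sorting the coordinates of `c` increasingly along `π`, Abel summation against the
nonnegative suffix slacks `∑ k ∈ S, Q k - C S` gives Edmonds' greedy inequality
`⟨c, q_π⟩ ≤ ⟨c, Q⟩`, a contradiction.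
-/

open Finset
open scoped Pointwise

theorem convex_setOf_forall_le_sum {ι : Type*} (C : Finset ι → ℝ) (p : Finset ι → Prop) :
    Convex ℝ {Q : ι → ℝ | ∀ K, p K → C K ≤ ∑ k ∈ K, Q k} := by
  simp only [Set.ofPred_forall]
  refine convex_iInter fun K => convex_iInter fun _ => convex_halfSpace_ge ?_ (C K)
  exact ⟨fun x y => by simp only [Pi.add_apply, sum_add_distrib],
    fun a x => by simp only [Pi.smul_apply, smul_eq_mul, mul_sum]⟩

section Separation

variable {ι : Type*} [Fintype ι]

theorem nonneg_of_lt_dotProduct_add {c v : ι → ℝ} {u : ℝ}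
    (h : ∀ w : ι → ℝ, 0 ≤ w → u < c ⬝ᵥ (v + w)) : 0 ≤ c := by
  classical
  intro i
  by_contra! hi
  rw [Pi.zero_apply] at hi
  set t := (c ⬝ᵥ v - u) / -c i
  have ht : 0 ≤ t := div_nonneg (by linarith [by simpa using h 0 le_rfl]) (by linarith)
  have := h (Pi.single i t) (Pi.single_nonneg.2 ht)
  rw [dotProduct_add, dotProduct_single, mul_comm, ← neg_neg (c i), mul_neg,
    div_mul_cancel₀ _ (neg_ne_zero.2 hi.ne)] at this
  linarith

theorem mem_convexHull_add_Ici_of_forall_exists_dotProduct_le {V : Set (ι → ℝ)}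
    (hV : V.Finite) {x : ι → ℝ} (h : ∀ c : ι → ℝ, 0 ≤ c → ∃ v ∈ V, c ⬝ᵥ v ≤ c ⬝ᵥ x) :
    x ∈ convexHull ℝ V + Set.Ici (0 : ι → ℝ) := by
  classical
  by_contra hx
  obtain ⟨f, u, hfx, hfS⟩ := geometric_hahn_banach_point_closed
    ((convex_convexHull ℝ V).add (convex_Ici 0)) (isClosed_Ici.add_left_of_isCompact
      (hV.isCompact_convexHull (𝕜 := ℝ))) hx
  set c := (dotProductEquiv ℝ ι).symm f.toLinearMap
  have hf : ∀ y, f y = c ⬝ᵥ y := fun y =>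
    (LinearMap.congr_fun ((dotProductEquiv ℝ ι).apply_symm_apply f.toLinearMap) y).symm
  obtain ⟨v₀, hv₀, -⟩ := h 0 le_rfl
  have hc : 0 ≤ c := nonneg_of_lt_dotProduct_add (v := v₀) (u := u) fun w hw =>
    hf _ ▸ hfS _ (Set.add_mem_add (subset_convexHull ℝ V hv₀) hw)
  obtain ⟨v, hv, hle⟩ := h c hc
  have := hfS v (by
    simpa using Set.add_mem_add (subset_convexHull ℝ V hv) (Set.self_mem_Ici (a := (0 : ι → ℝ))))
  linarith [hf x, hf v]

end Separation

theorem sub_le_sub_insert_of_supermodular {α : Type*} [DecidableEq α] {C : Finset α → ℝ}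
    (hsup : ∀ K L : Finset α, C K + C L ≤ C (K ∪ L) + C (K ∩ L)) {K T : Finset α} {a : α}
    (ha : a ∈ K) : C (K ∩ insert a T) - C (K ∩ T) ≤ C (insert a T) - C T := by
  have hunion : K ∩ insert a T ∪ T = insert a T := by
    ext x; simp only [mem_union, mem_inter, mem_insert]; grind
  have hinter : K ∩ insert a T ∩ T = K ∩ T := by
    ext x; simp only [mem_inter, mem_insert]; grind
  linarith [hunion ▸ hinter ▸ hsup (K ∩ insert a T) T]

theorem Fin.sum_univ_sub_succ {m : ℕ} (f : ℕ → ℝ) :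
    ∑ i : Fin m, (f i - f (i + 1)) = f 0 - f m := by
  rw [Fin.sum_univ_eq_sum_range (fun i => f i - f (i + 1)), sum_range_sub']

-- Summation by parts; the lower bound `b` of `a` is what makes the induction go through.
theorem Fin.mul_le_sum_mul_sub_succ {m : ℕ} {a : Fin m → ℝ} {D : ℕ → ℝ} {b : ℝ}
    (ha : Monotone a) (hb : 0 ≤ b) (hba : ∀ i, b ≤ a i) (hD : ∀ n, 0 ≤ D n) (hDm : D m = 0) :
    b * D 0 ≤ ∑ i : Fin m, a i * (D i - D (i + 1)) := by
  induction m generalizing D b with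
  | zero => simp [hDm]
  | succ m ih =>
    have htail := ih (a := a ∘ Fin.succ) (D := fun n => D (n + 1)) (b := a 0)
      (ha.comp (Fin.strictMono_succ.monotone)) (hb.trans (hba 0))
      (fun i => ha (Fin.zero_le _)) (fun n => hD _) hDm
    simp only [Function.comp_apply] at htail
    rw [Fin.sum_univ_succ]
    simp only [Fin.val_zero, Fin.val_succ, zero_add]
    nlinarith [mul_le_mul_of_nonneg_right (hba 0) (hD 0)]

variable {m : ℕ}

namespace Equiv.Perm

-- 0-based positions: `π.suffix n = {π n, π (n + 1), …}`, which is empty once `m ≤ n`.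
def suffix (π : Equiv.Perm (Fin m)) (n : ℕ) : Finset (Fin m) :=
  (univ.filter fun j : Fin m => n ≤ (j : ℕ)).image π

variable {π : Equiv.Perm (Fin m)}

theorem mem_suffix {n : ℕ} {k : Fin m} : k ∈ suffix π n ↔ n ≤ (π.symm k : ℕ) := by
  simp only [suffix, mem_image, mem_filter, mem_univ, true_and]
  exact ⟨by rintro ⟨j, hj, rfl⟩; simpa using hj, fun h => ⟨π.symm k, h, π.apply_symm_apply k⟩⟩

theorem suffix_zero : suffix π 0 = univ := by
  ext k; simp [mem_suffix]

theorem suffix_eq_empty {n : ℕ} (hn : m ≤ n) : suffix π n = ∅ := by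
  ext k; simp only [mem_suffix, notMem_empty, iff_false, not_le]; omega

theorem suffix_eq_insert (i : Fin m) : suffix π i = insert (π i) (suffix π (i + 1)) := by
  ext k
  simp only [mem_suffix, mem_insert, ← Equiv.symm_apply_eq, Fin.ext_iff]
  omega

theorem apply_notMem_suffix_succ (i : Fin m) : π i ∉ suffix π (i + 1) := by
  simp [mem_suffix]

end Equiv.Perm

theorem cornerPoint_apply_perm (C : Finset (Fin m) → ℝ) (π : Equiv.Perm (Fin m)) (i : Fin m) :
    cornerPoint C π (π i) = C (π.suffix i) - C (π.suffix (i + 1)) := by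
  simp only [cornerPoint, Equiv.Perm.suffix, Equiv.symm_apply_apply, Fin.le_def, Fin.lt_def,
    Nat.lt_iff_add_one_le]

section Supermodular

open Equiv.Perm

variable {C : Finset (Fin m) → ℝ}

theorem le_sum_cornerPoint (hsup : ∀ K L : Finset (Fin m), C K + C L ≤ C (K ∪ L) + C (K ∩ L))
    (h0 : C ∅ = 0) (π : Equiv.Perm (Fin m)) (K : Finset (Fin m)) :
    C K ≤ ∑ k ∈ K, cornerPoint C π k := calc
  C K = ∑ i : Fin m, (C (K ∩ π.suffix i) - C (K ∩ π.suffix (i + 1))) := by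
    rw [Fin.sum_univ_sub_succ fun n => C (K ∩ π.suffix n), suffix_zero,
      suffix_eq_empty le_rfl, inter_univ, inter_empty, h0, sub_zero]
  _ ≤ ∑ i : Fin m, if π i ∈ K then cornerPoint C π (π i) else 0 := by
    refine sum_le_sum fun i _ => ?_
    rw [suffix_eq_insert i]
    split_ifs with hi
    · rw [cornerPoint_apply_perm, suffix_eq_insert i]
      exact sub_le_sub_insert_of_supermodular hsup hi
    · rw [inter_insert_of_notMem hi, sub_self]
  _ = ∑ k ∈ K, cornerPoint C π k := by
    rw [Equiv.sum_comp π fun k => if k ∈ K then cornerPoint C π k else 0, sum_ite_mem, univ_inter]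

theorem dotProduct_cornerPoint_le (h0 : C ∅ = 0) {Q : Fin m → ℝ}
    (hQ : ∀ K : Finset (Fin m), K.Nonempty → C K ≤ ∑ k ∈ K, Q k) {π : Equiv.Perm (Fin m)}
    {c : Fin m → ℝ} (hc : 0 ≤ c) (hcπ : Monotone (c ∘ π)) :
    c ⬝ᵥ cornerPoint C π ≤ c ⬝ᵥ Q := by
  set D : ℕ → ℝ := fun n => ∑ k ∈ π.suffix n, Q k - C (π.suffix n)
  have hD : ∀ n, 0 ≤ D n := fun n => by
    rcases (π.suffix n).eq_empty_or_nonempty with h | h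
    · simp [D, h, h0]
    · exact sub_nonneg.2 (hQ _ h)
  have hDm : D m = 0 := by simp [D, suffix_eq_empty le_rfl, h0]
  have hstep : ∀ i : Fin m, Q (π i) - cornerPoint C π (π i) = D i - D (i + 1) := fun i => by
    simp only [D, cornerPoint_apply_perm]
    rw [suffix_eq_insert i, sum_insert (apply_notMem_suffix_succ i)]
    ring
  have hdiff : c ⬝ᵥ Q - c ⬝ᵥ cornerPoint C π = ∑ i, c (π i) * (D i - D (i + 1)) := by
    rw [← dotProduct_sub, dotProduct, ← Equiv.sum_comp π]
    simp only [Pi.sub_apply, hstep]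
  have := Fin.mul_le_sum_mul_sub_succ hcπ le_rfl (fun i => hc (π i)) hD hDm
  simp only [zero_mul, Function.comp_apply] at this
  linarith

end Supermodular

theorem PH_eq_conv_corners_add_orthant_general {m : ℕ}
    (C : Finset (Fin m) → ℝ)
    (hsup : ∀ K L : Finset (Fin m), C K + C L ≤ C (K ∪ L) + C (K ∩ L))
    (h0 : C ∅ = 0) :
    {Q : Fin m → ℝ | ∀ K : Finset (Fin m), K.Nonempty → C K ≤ ∑ k ∈ K, Q k}
      = {x : Fin m → ℝ |
          ∃ s ∈ convexHull ℝ {q : Fin m → ℝ | ∃ π : Equiv.Perm (Fin m), q = cornerPoint C π},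
          ∃ w : Fin m → ℝ, (∀ k, 0 ≤ w k) ∧ x = s + w} := by
  set corners := {q : Fin m → ℝ | ∃ π : Equiv.Perm (Fin m), q = cornerPoint C π}
  ext x
  constructor
  · intro hx
    have hfin : corners.Finite :=
      (Set.finite_range (cornerPoint C)).subset fun _ ⟨π, hπ⟩ => ⟨π, hπ.symm⟩
    obtain ⟨s, hs, w, hw, rfl⟩ := mem_convexHull_add_Ici_of_forall_exists_dotProduct_le hfin
      fun c hc => ⟨_, ⟨Tuple.sort c, rfl⟩,
        dotProduct_cornerPoint_le h0 hx hc (Tuple.monotone_sort c)⟩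
    exact ⟨s, hs, w, hw, rfl⟩
  · rintro ⟨s, hs, w, hw, rfl⟩ K hK
    have hsP := convexHull_min (by rintro _ ⟨π, rfl⟩ K _; exact le_sum_cornerPoint hsup h0 π K)
      (convex_setOf_forall_le_sum C Finset.Nonempty) hs
    calc C K ≤ ∑ k ∈ K, s k := hsP K hK
      _ ≤ ∑ k ∈ K, (s + w) k := sum_le_sum fun k _ => le_add_of_nonneg_right (hw k)

/-- Minkowski–Weyl description of the rate polyhedron: for a supermodular C with C(∅) = 0,
P_H = {Q : ∑_{k∈K} Q_k ≥ C(K) for all nonempty K} equals the Minkowski sum of the convex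
hull of the corner points {q_π} and the nonnegative orthant. -/
theorem PH_eq_conv_corners_add_orthant {m : ℕ} (hm : 1 ≤ m)
    (C : Finset (Fin m) → ℝ)
    (hsup : ∀ K L : Finset (Fin m), C K + C L ≤ C (K ∪ L) + C (K ∩ L))
    (h0 : C ∅ = 0) :
    {Q : Fin m → ℝ | ∀ K : Finset (Fin m), K.Nonempty → C K ≤ ∑ k ∈ K, Q k}
      = {x : Fin m → ℝ |
          ∃ s ∈ convexHull ℝ {q : Fin m → ℝ | ∃ π : Equiv.Perm (Fin m), q = cornerPoint C π},
          ∃ w : Fin m → ℝ, (∀ k, 0 ≤ w k) ∧ x = s + w} :=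
  PH_eq_conv_corners_add_orthant_general C hsup h0
end

section
/- Let ρ be a density matrix on X_1⊗…⊗X_m and σ a density matrix on Y_1⊗…⊗Y_m (all factors finite-dimensional). Regard the tensor product ρ⊗σ as a density matrix on the m systems (X_1Y_1)⊗(X_2Y_2)⊗…⊗(X_mY_m), where the i-th system is the pair X_iY_i. Then the multiparty squashed entanglement is subadditive: E_sq(X_1Y_1;X_2Y_2;…;X_mY_m)_{ρ⊗σ} ≤ E_sq(X_1;X_2;…;X_m)_ρ + E_sq(Y_1;Y_2;…;Y_m)_σ. -/
open scoped BigOperators ComplexOrder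

/-- Von Neumann entropy (base 2) of a matrix, via its eigenvalues when Hermitian. -/
noncomputable def vnEntropy {n : Type} [Fintype n] [DecidableEq n] (ρ : Matrix n n ℂ) : ℝ :=
  if h : ρ.IsHermitian then ∑ i, -(h.eigenvalues i * Real.logb 2 (h.eigenvalues i)) else 0

/-- A density matrix: positive semidefinite with unit trace. -/
def IsDensityMatrix {n : Type} [Fintype n] (ρ : Matrix n n ℂ) : Prop :=
  ρ.PosSemidef ∧ ρ.trace = 1

/-- Reduced density matrix of a multipartite state on the factors in `S`. -/
noncomputable def reduced {ι : Type} [Fintype ι] [DecidableEq ι] {τ : ι → Type}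
    [∀ i, Fintype (τ i)]
    (ρ : Matrix (∀ i, τ i) (∀ i, τ i) ℂ) (S : Finset ι) :
    Matrix (∀ i : {j // j ∈ S}, τ i.1) (∀ i : {j // j ∈ S}, τ i.1) ℂ :=
  Matrix.of fun x y => ∑ z : ∀ i : {j // j ∉ S}, τ i.1,
    ρ (fun i => if h : i ∈ S then x ⟨i, h⟩ else z ⟨i, h⟩)
      (fun i => if h : i ∈ S then y ⟨i, h⟩ else z ⟨i, h⟩)

/-- Entropy of the subsystem `S` of a multipartite state. -/
noncomputable def entS {ι : Type} [Fintype ι] [DecidableEq ι] {τ : ι → Type}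
    [∀ i, Fintype (τ i)] [∀ i, DecidableEq (τ i)]
    (ρ : Matrix (∀ i, τ i) (∀ i, τ i) ℂ) (S : Finset ι) : ℝ :=
  vnEntropy (reduced ρ S)

/-- Reduced state on the factors in `S` together with the extra system `E`. -/
noncomputable def reducedE {ι : Type} [Fintype ι] [DecidableEq ι] {τ : ι → Type}
    [∀ i, Fintype (τ i)] {E : Type} [Fintype E]
    (ρ : Matrix ((∀ i, τ i) × E) ((∀ i, τ i) × E) ℂ) (S : Finset ι) :
    Matrix ((∀ i : {j // j ∈ S}, τ i.1) × E) ((∀ i : {j // j ∈ S}, τ i.1) × E) ℂ :=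
  Matrix.of fun x y => ∑ z : ∀ i : {j // j ∉ S}, τ i.1,
    ρ ((fun i => if h : i ∈ S then x.1 ⟨i, h⟩ else z ⟨i, h⟩), x.2)
      ((fun i => if h : i ∈ S then y.1 ⟨i, h⟩ else z ⟨i, h⟩), y.2)

/-- Entropy H(S,E) of the subsystem S together with the extra system E. -/
noncomputable def entSE {ι : Type} [Fintype ι] [DecidableEq ι] {τ : ι → Type}
    [∀ i, Fintype (τ i)] [∀ i, DecidableEq (τ i)] {E : Type} [Fintype E] [DecidableEq E]
    (ρ : Matrix ((∀ i, τ i) × E) ((∀ i, τ i) × E) ℂ) (S : Finset ι) : ℝ :=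
  vnEntropy (reducedE ρ S)

/-- Reduced state on the factors in `S` alone (tracing out `E` and the rest). -/
noncomputable def reducedA {ι : Type} [Fintype ι] [DecidableEq ι] {τ : ι → Type}
    [∀ i, Fintype (τ i)] {E : Type} [Fintype E]
    (ρ : Matrix ((∀ i, τ i) × E) ((∀ i, τ i) × E) ℂ) (S : Finset ι) :
    Matrix (∀ i : {j // j ∈ S}, τ i.1) (∀ i : {j // j ∈ S}, τ i.1) ℂ :=
  Matrix.of fun x y => ∑ z : ∀ i : {j // j ∉ S}, τ i.1, ∑ e : E,
    ρ ((fun i => if h : i ∈ S then x ⟨i, h⟩ else z ⟨i, h⟩), e)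
      ((fun i => if h : i ∈ S then y ⟨i, h⟩ else z ⟨i, h⟩), e)

/-- Entropy H(S) (tracing out `E` as well). -/
noncomputable def entSA {ι : Type} [Fintype ι] [DecidableEq ι] {τ : ι → Type}
    [∀ i, Fintype (τ i)] [∀ i, DecidableEq (τ i)] {E : Type} [Fintype E] [DecidableEq E]
    (ρ : Matrix ((∀ i, τ i) × E) ((∀ i, τ i) × E) ℂ) (S : Finset ι) : ℝ :=
  vnEntropy (reducedA ρ S)

/-- Partial trace over the extension system `E`. -/
noncomputable def ptraceE {ι : Type} {τ : ι → Type} {E : Type} [Fintype E]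
    (ρ : Matrix ((∀ i, τ i) × E) ((∀ i, τ i) × E) ℂ) :
    Matrix (∀ i, τ i) (∀ i, τ i) ℂ :=
  Matrix.of fun x y => ∑ e : E, ρ (x, e) (y, e)

/-- Conditional multiparty information I(X_1;…;X_m|E). -/
noncomputable def condMI {ι : Type} [Fintype ι] [DecidableEq ι] {τ : ι → Type}
    [∀ i, Fintype (τ i)] [∀ i, DecidableEq (τ i)] {E : Type} [Fintype E] [DecidableEq E]
    (ρ : Matrix ((∀ i, τ i) × E) ((∀ i, τ i) × E) ℂ) : ℝ :=
  (∑ i : ι, entSE ρ {i}) - entSE ρ Finset.univ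
    - ((Fintype.card ι : ℝ) - 1) * entSE ρ (∅ : Finset ι)

/-- Multiparty squashed entanglement. -/
noncomputable def Esq {ι : Type} [Fintype ι] [DecidableEq ι] {τ : ι → Type}
    [∀ i, Fintype (τ i)] [∀ i, DecidableEq (τ i)]
    (ρ : Matrix (∀ i, τ i) (∀ i, τ i) ℂ) : ℝ :=
  (1 / 2) * sInf {x : ℝ | ∃ dE : ℕ, 1 ≤ dE ∧
    ∃ ρe : Matrix ((∀ i, τ i) × Fin dE) ((∀ i, τ i) × Fin dE) ℂ,
      IsDensityMatrix ρe ∧ ptraceE ρe = ρ ∧ x = condMI ρe}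

/-- The pure density matrix |v⟩⟨v|. -/
noncomputable def pureDM {α : Type} (v : α → ℂ) : Matrix α α ℂ :=
  Matrix.of fun x y => v x * (starRingEnd ℂ) (v y)


/-- The tensor product ρ ⊗ σ of a state on X_1 ⊗ ⋯ ⊗ X_m and a state on Y_1 ⊗ ⋯ ⊗ Y_m,
regarded as a state on the m paired systems (X_1Y_1) ⊗ ⋯ ⊗ (X_mY_m). -/
noncomputable def pairedProd {m : ℕ} {dX dY : Fin m → ℕ}
    (ρ : Matrix (∀ i, Fin (dX i)) (∀ i, Fin (dX i)) ℂ)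
    (σ : Matrix (∀ i, Fin (dY i)) (∀ i, Fin (dY i)) ℂ) :
    Matrix (∀ i, Fin (dX i) × Fin (dY i)) (∀ i, Fin (dX i) × Fin (dY i)) ℂ :=
  Matrix.of fun u v =>
    ρ (fun i => (u i).1) (fun i => (v i).1) * σ (fun i => (u i).2) (fun i => (v i).2)

/-!
If `η₁` extends `ρ` with environment `E₁` and `η₂` extends `σ` with environment `E₂`, then
`η₁ ⊗ η₂`, read as a state on the paired systems with environment `E₁E₂`, extends `ρ ⊗ σ`. Each
of its marginals is the tensor product of the corresponding marginals of `η₁` and `η₂`, and von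
Neumann entropy is additive on tensor products, so its conditional multiparty information is the
sum of those of `η₁` and `η₂`. Taking infima gives the inequality.

The infima are only meaningful (`sInf` of a set of reals unbounded below is `0`) because the
conditional multiparty information is bounded below uniformly in the extension: by subadditivity
and the Araki–Lieb inequality, `|H(X_S E) - H(E)| ≤ log |X_S|`.
-/

open Matrix Polynomial Real
open scoped Kronecker

section Spectrum

variable {n m : Type} [Fintype n] [DecidableEq n] [Fintype m] [DecidableEq m]

lemma vnEntropy_eq_sum_negMulLog {A : Matrix n n ℂ} (hA : A.IsHermitian) :
    vnEntropy A = (∑ i, negMulLog (hA.eigenvalues i)) / log 2 := by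
  rw [vnEntropy, dif_pos hA, Finset.sum_div]
  refine Finset.sum_congr rfl fun i _ => ?_
  rw [negMulLog, logb]
  ring

lemma vnEntropy_eq_sum_roots_charpoly {A : Matrix n n ℂ} (hA : A.IsHermitian) :
    vnEntropy A = (A.charpoly.roots.map fun z => negMulLog z.re).sum / log 2 := by
  rw [vnEntropy_eq_sum_negMulLog hA, hA.roots_charpoly_eq_eigenvalues, Multiset.map_map,
    Finset.sum_eq_multiset_sum]
  simp

lemma vnEntropy_eq_of_charpoly_eq_prod {κ : Type} [Fintype κ] {A : Matrix n n ℂ}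
    (hA : A.IsHermitian) {d : κ → ℝ} (h : A.charpoly = ∏ k, (X - C (d k : ℂ))) :
    vnEntropy A = (∑ k, negMulLog (d k)) / log 2 := by
  have hprod : ∏ k, (X - C (d k : ℂ))
      = ((Finset.univ.val.map fun k => (d k : ℂ)).map fun a => X - C a).prod := by
    rw [Multiset.map_map]
    rfl
  rw [vnEntropy_eq_sum_roots_charpoly hA, h, hprod, roots_multiset_prod_X_sub_C,
    Multiset.map_map, Finset.sum_eq_multiset_sum]
  simp

lemma vnEntropy_eq_of_charpoly_eq {A : Matrix n n ℂ} {B : Matrix m m ℂ} (hA : A.IsHermitian)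
    (hB : B.IsHermitian) (h : A.charpoly = B.charpoly) : vnEntropy A = vnEntropy B := by
  rw [vnEntropy_eq_sum_roots_charpoly hA, vnEntropy_eq_sum_roots_charpoly hB, h]

lemma vnEntropy_reindex {A : Matrix n n ℂ} (hA : A.IsHermitian) (e : n ≃ m) :
    vnEntropy (reindex e e A) = vnEntropy A :=
  vnEntropy_eq_of_charpoly_eq (hA.submatrix e.symm) hA (charpoly_reindex e A)

lemma vnEntropy_transpose {A : Matrix n n ℂ} (hA : A.IsHermitian) :
    vnEntropy Aᵀ = vnEntropy A :=
  vnEntropy_eq_of_charpoly_eq hA.transpose hA (charpoly_transpose A)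

-- The characteristic polynomials agree up to a power of `X`, and the eigenvalue `0` contributes
-- nothing to the entropy.
lemma vnEntropy_mul_conjTranspose_comm (M : Matrix n m ℂ) :
    vnEntropy (M * Mᴴ) = vnEntropy (Mᴴ * M) := by
  have hroots (p : ℂ[X]) (hp : p.Monic) (k : ℕ) :
      ((X ^ k * p).roots.map fun z : ℂ => negMulLog z.re).sum
        = (p.roots.map fun z : ℂ => negMulLog z.re).sum := by
    simp [roots_mul (mul_ne_zero (pow_ne_zero k X_ne_zero) hp.ne_zero), Multiset.map_nsmul,
      Multiset.sum_nsmul]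
  rw [vnEntropy_eq_sum_roots_charpoly (isHermitian_mul_conjTranspose_self M),
    vnEntropy_eq_sum_roots_charpoly (isHermitian_conjTranspose_mul_self M),
    ← hroots _ (charpoly_monic _) (Fintype.card m), ← hroots _ (charpoly_monic _) (Fintype.card n),
    charpoly_mul_comm']

lemma vnEntropy_conjTranspose_mul_mul {ω : Matrix n n ℂ} (hω : ω.IsHermitian) {T : Matrix n n ℂ}
    (hT : T * Tᴴ = 1) : vnEntropy (Tᴴ * ω * T) = vnEntropy ω :=
  vnEntropy_eq_of_charpoly_eq (isHermitian_conjTranspose_mul_mul T hω) hω (by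
    rw [Matrix.mul_assoc, charpoly_mul_comm, Matrix.mul_assoc, hT, Matrix.mul_one])

lemma Matrix.IsHermitian.charpoly_kronecker {A : Matrix n n ℂ} {B : Matrix m m ℂ}
    (hA : A.IsHermitian) (hB : B.IsHermitian) :
    (A ⊗ₖ B).charpoly
      = ∏ ij : n × m, (X - C ((hA.eigenvalues ij.1 * hB.eigenvalues ij.2 : ℝ) : ℂ)) := by
  conv_lhs => rw [hA.spectral_theorem, hB.spectral_theorem, Unitary.conjStarAlgAut_apply,
    Unitary.conjStarAlgAut_apply, mul_kronecker_mul, mul_kronecker_mul, charpoly_mul_comm,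
    ← mul_assoc, ← mul_kronecker_mul]
  simp [charpoly_diagonal, diagonal_kronecker_diagonal]

lemma Matrix.IsHermitian.conjTranspose_eigenvectorUnitary_mul_mul {A : Matrix n n ℂ}
    (hA : A.IsHermitian) :
    (hA.eigenvectorUnitary : Matrix n n ℂ)ᴴ * A * hA.eigenvectorUnitary
      = diagonal fun i => (hA.eigenvalues i : ℂ) := by
  have h := hA.conjStarAlgAut_star_eigenvectorUnitary
  rw [Unitary.conjStarAlgAut_star_apply] at h
  exact h

end Spectrum

lemma sum_normSq_row_of_mul_conjTranspose_eq_one {n : Type} [Fintype n] [DecidableEq n]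
    {W : Matrix n n ℂ} (hW : W * Wᴴ = 1) (i : n) : ∑ k, Complex.normSq (W i k) = 1 := by
  have h := congrFun (congrFun hW i) i
  simp only [mul_apply, conjTranspose_apply, one_apply_eq, RCLike.star_def, Complex.mul_conj] at h
  exact_mod_cast h

lemma sum_normSq_col_of_conjTranspose_mul_eq_one {n : Type} [Fintype n] [DecidableEq n]
    {W : Matrix n n ℂ} (hW : Wᴴ * W = 1) (k : n) : ∑ i, Complex.normSq (W i k) = 1 := by
  have h := congrFun (congrFun hW k) k
  simp only [mul_apply, conjTranspose_apply, one_apply_eq, RCLike.star_def,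
    ← Complex.normSq_eq_conj_mul_self] at h
  exact_mod_cast h

section DensityMatrix

variable {n m : Type} [Fintype n] [Fintype m]

lemma IsDensityMatrix.reindex {A : Matrix n n ℂ} (hA : IsDensityMatrix A) (e : n ≃ m) :
    IsDensityMatrix (reindex e e A) :=
  ⟨hA.1.submatrix _, by rw [← hA.2]; exact Fintype.sum_equiv e.symm _ _ fun _ => rfl⟩

lemma IsDensityMatrix.kronecker {A : Matrix n n ℂ} {B : Matrix m m ℂ} (hA : IsDensityMatrix A)
    (hB : IsDensityMatrix B) : IsDensityMatrix (A ⊗ₖ B) :=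
  ⟨hA.1.kronecker hB.1, by rw [trace_kronecker, hA.2, hB.2, mul_one]⟩

variable [DecidableEq n] [DecidableEq m]

lemma IsDensityMatrix.sum_eigenvalues {A : Matrix n n ℂ} (hA : IsDensityMatrix A) :
    ∑ i, hA.1.1.eigenvalues i = 1 := by
  have h : ((∑ i, hA.1.1.eigenvalues i : ℝ) : ℂ) = 1 := by
    push_cast
    exact hA.1.1.trace_eq_sum_eigenvalues.symm.trans hA.2
  exact_mod_cast h

lemma vnEntropy_kronecker {A : Matrix n n ℂ} {B : Matrix m m ℂ} (hA : IsDensityMatrix A)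
    (hB : IsDensityMatrix B) : vnEntropy (A ⊗ₖ B) = vnEntropy A + vnEntropy B := by
  rw [vnEntropy_eq_of_charpoly_eq_prod (hA.kronecker hB).1.1 (hA.1.1.charpoly_kronecker hB.1.1),
    vnEntropy_eq_sum_negMulLog hA.1.1, vnEntropy_eq_sum_negMulLog hB.1.1, ← add_div,
    Fintype.sum_prod_type]
  simp only [negMulLog_mul, Finset.sum_add_distrib, ← Finset.sum_mul, ← Finset.mul_sum,
    hB.sum_eigenvalues, one_mul]
  rw [hA.sum_eigenvalues, one_mul]

end DensityMatrix

lemma Real.sub_le_mul_log_sub_mul_log {a c : ℝ} (ha : 0 ≤ a) (hc : 0 ≤ c)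
    (hac : c = 0 → a = 0) : a - c ≤ a * log a - a * log c := by
  rcases ha.eq_or_lt with rfl | ha
  · simpa using hc
  rcases hc.eq_or_lt with rfl | hc
  · exact absurd (hac rfl) ha.ne'
  have h := mul_le_mul_of_nonneg_left (self_sub_one_le_mul_log (div_pos ha hc).le) hc.le
  rw [log_div ha.ne' hc.ne'] at h
  field_simp at h
  linarith

lemma Real.sum_mul_log_le_sum_mul_log {κ : Type} [Fintype κ] {a c : κ → ℝ} (ha : 0 ≤ a)
    (hc : 0 ≤ c) (hac : ∀ k, c k = 0 → a k = 0) (hsum : ∑ k, c k ≤ ∑ k, a k) :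
    ∑ k, a k * log (c k) ≤ ∑ k, a k * log (a k) := by
  have := Finset.sum_le_sum fun k (_ : k ∈ Finset.univ) =>
    sub_le_mul_log_sub_mul_log (ha k) (hc k) (hac k)
  simp only [Finset.sum_sub_distrib] at this
  linarith

lemma Real.sum_negMulLog_le_add_marginals {U V : Type} [Fintype U] [Fintype V] {r : U × V → ℝ}
    (hr : 0 ≤ r) (h1 : ∑ l, r l = 1) :
    ∑ l, negMulLog (r l) ≤ ∑ i, negMulLog (∑ j, r (i, j)) + ∑ j, negMulLog (∑ i, r (i, j)) := by
  set α : U → ℝ := fun i => ∑ j, r (i, j)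
  set β : V → ℝ := fun j => ∑ i, r (i, j)
  have hα (i : U) (j : V) : r (i, j) ≤ α i :=
    Finset.single_le_sum (fun j _ => hr (i, j)) (Finset.mem_univ j)
  have hβ (i : U) (j : V) : r (i, j) ≤ β j :=
    Finset.single_le_sum (fun i _ => hr (i, j)) (Finset.mem_univ i)
  have hαsum : ∑ i, α i = 1 := by rw [← h1, Fintype.sum_prod_type]
  have hβsum : ∑ j, β j = 1 := by rw [← h1, Fintype.sum_prod_type_right]
  have hsplit (l : U × V) :
      r l * log (α l.1 * β l.2) = r l * log (α l.1) + r l * log (β l.2) := by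
    rcases (hr l).eq_or_lt with h | h
    · simp [← h]
    · rw [log_mul (h.trans_le (hα l.1 l.2)).ne' (h.trans_le (hβ l.1 l.2)).ne', mul_add]
  have hgibbs := sum_mul_log_le_sum_mul_log (c := fun l => α l.1 * β l.2) hr
    (fun l => mul_nonneg ((hr l).trans (hα l.1 l.2)) ((hr l).trans (hβ l.1 l.2)))
    (fun l h => by
      rcases mul_eq_zero.mp h with h | h
      · exact le_antisymm (h ▸ hα l.1 l.2) (hr l)
      · exact le_antisymm (h ▸ hβ l.1 l.2) (hr l))
    (by rw [Fintype.sum_prod_type, ← Finset.sum_mul_sum, hαsum, hβsum, h1, mul_one])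
  simp only [hsplit, Finset.sum_add_distrib] at hgibbs
  rw [Fintype.sum_prod_type (fun l => r l * log (α l.1)),
    Fintype.sum_prod_type_right (fun l => r l * log (β l.2))] at hgibbs
  simp only [← Finset.sum_mul] at hgibbs
  simp only [negMulLog, neg_mul, Finset.sum_neg_distrib]
  linarith

lemma vnEntropy_le_logb_card {n : Type} [Fintype n] [DecidableEq n] {A : Matrix n n ℂ}
    (hA : IsDensityMatrix A) : vnEntropy A ≤ logb 2 (Fintype.card n) := by
  have hcard : (0 : ℝ) < Fintype.card n := by
    have : Nonempty n := by
      by_contra h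
      simpa [not_nonempty_iff.mp h] using hA.sum_eigenvalues
    exact_mod_cast Fintype.card_pos
  have h := sum_mul_log_le_sum_mul_log (c := fun _ => (Fintype.card n : ℝ)⁻¹)
    (fun i => hA.1.eigenvalues_nonneg i) (fun _ => by positivity)
    (fun _ h => absurd h (by positivity)) (by simp [hA.sum_eigenvalues, hcard.ne'])
  rw [← Finset.sum_mul, hA.sum_eigenvalues, log_inv] at h
  rw [vnEntropy_eq_sum_negMulLog hA.1.1, logb, div_le_div_iff_of_pos_right (log_pos one_lt_two)]
  simp only [negMulLog, neg_mul, Finset.sum_neg_distrib]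
  linarith

-- The diagonal of `ω` is a doubly stochastic average of its spectrum, and `negMulLog` is concave.
lemma vnEntropy_le_sum_negMulLog_diag {n : Type} [Fintype n] [DecidableEq n] {ω : Matrix n n ℂ}
    (hω : ω.PosSemidef) : vnEntropy ω ≤ (∑ i, negMulLog (ω i i).re) / log 2 := by
  set W := (hω.1.eigenvectorUnitary : Matrix n n ℂ)
  set e := hω.1.eigenvalues
  have hW : W * Wᴴ = 1 := mem_unitaryGroup_iff.mp hω.1.eigenvectorUnitary.2
  have hW' : Wᴴ * W = 1 := mem_unitaryGroup_iff'.mp hω.1.eigenvectorUnitary.2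
  have hdiag (i : n) : (ω i i).re = ∑ k, Complex.normSq (W i k) * e k := by
    conv_lhs => rw [hω.1.spectral_theorem, Unitary.conjStarAlgAut_apply]
    rw [mul_apply, Complex.re_sum]
    simp only [mul_diagonal, star_apply, Function.comp_apply]
    refine Finset.sum_congr rfl fun k _ => ?_
    rw [mul_right_comm]
    simp only [RCLike.star_def, Complex.mul_conj]
    exact Complex.re_ofReal_mul _ _
  have hjensen (i : n) : ∑ k, Complex.normSq (W i k) * negMulLog (e k)
      ≤ negMulLog (∑ k, Complex.normSq (W i k) * e k) :=
    concaveOn_negMulLog.le_map_sum (fun k _ => Complex.normSq_nonneg _)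
      (sum_normSq_row_of_mul_conjTranspose_eq_one hW i) fun k _ => hω.eigenvalues_nonneg k
  rw [vnEntropy_eq_sum_negMulLog hω.1]
  gcongr ?_ / _
  calc ∑ k, negMulLog (e k) = ∑ i, ∑ k, Complex.normSq (W i k) * negMulLog (e k) := by
        rw [Finset.sum_comm]
        simp [← Finset.sum_mul, sum_normSq_col_of_conjTranspose_mul_eq_one hW']
    _ ≤ ∑ i, negMulLog (ω i i).re := Finset.sum_le_sum fun i _ => hdiag i ▸ hjensen i

namespace Matrix

variable {U V : Type}

def traceRight {R : Type} [AddCommMonoid R] [Fintype V] (ω : Matrix (U × V) (U × V) R) :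
    Matrix U U R :=
  of fun a b => ∑ v, ω (a, v) (b, v)

def traceLeft {R : Type} [AddCommMonoid R] [Fintype U] (ω : Matrix (U × V) (U × V) R) :
    Matrix V V R :=
  of fun a b => ∑ u, ω (u, a) (u, b)

section AddCommMonoid

variable {R : Type} [AddCommMonoid R] (ω : Matrix (U × V) (U × V) R)

lemma traceRight_eq_sum_submatrix [Fintype V] : traceRight ω = ∑ v, ω.submatrix (·, v) (·, v) := by
  ext a b
  simp [traceRight, sum_apply]

lemma traceLeft_eq_sum_submatrix [Fintype U] : traceLeft ω = ∑ u, ω.submatrix (u, ·) (u, ·) := by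
  ext a b
  simp [traceLeft, sum_apply]

variable [Fintype U] [Fintype V]

lemma trace_traceRight : (traceRight ω).trace = ω.trace := by
  simp [trace, traceRight, Fintype.sum_prod_type]

lemma trace_traceLeft : (traceLeft ω).trace = ω.trace := by
  simp [trace, traceLeft, Fintype.sum_prod_type]
  exact Finset.sum_comm

end AddCommMonoid

section CommSemiring

variable {R : Type} [CommSemiring R] [Fintype U] [Fintype V] (ω : Matrix (U × V) (U × V) R)

lemma traceRight_kronecker_one_mul [DecidableEq V] (A : Matrix U U R) :
    traceRight ((A ⊗ₖ (1 : Matrix V V R)) * ω) = A * traceRight ω := by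
  ext a c
  simp [traceRight, mul_apply, Fintype.sum_prod_type, one_apply, ite_mul, Finset.mul_sum]
  exact Finset.sum_comm

lemma traceRight_mul_kronecker_one [DecidableEq V] (C : Matrix U U R) :
    traceRight (ω * (C ⊗ₖ (1 : Matrix V V R))) = traceRight ω * C := by
  ext a c
  simp [traceRight, mul_apply, Fintype.sum_prod_type, one_apply, mul_ite, Finset.sum_mul]
  exact Finset.sum_comm

lemma traceRight_one_kronecker_mul_comm [DecidableEq U] (B : Matrix V V R) :
    traceRight (((1 : Matrix U U R) ⊗ₖ B) * ω) = traceRight (ω * ((1 : Matrix U U R) ⊗ₖ B)) := by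
  ext a c
  simp [traceRight, mul_apply, Fintype.sum_prod_type, one_apply, ite_mul, mul_ite]
  rw [Finset.sum_comm]
  simp only [mul_comm]

lemma traceLeft_one_kronecker_mul [DecidableEq U] (B : Matrix V V R) :
    traceLeft (((1 : Matrix U U R) ⊗ₖ B) * ω) = B * traceLeft ω := by
  ext a c
  simp [traceLeft, mul_apply, Fintype.sum_prod_type, one_apply, ite_mul, Finset.mul_sum]
  exact Finset.sum_comm

lemma traceLeft_mul_one_kronecker [DecidableEq U] (D : Matrix V V R) :
    traceLeft (ω * ((1 : Matrix U U R) ⊗ₖ D)) = traceLeft ω * D := by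
  ext a c
  simp [traceLeft, mul_apply, Fintype.sum_prod_type, one_apply, mul_ite, Finset.sum_mul]
  exact Finset.sum_comm

lemma traceLeft_kronecker_one_mul_comm [DecidableEq V] (A : Matrix U U R) :
    traceLeft ((A ⊗ₖ (1 : Matrix V V R)) * ω) = traceLeft (ω * (A ⊗ₖ (1 : Matrix V V R))) := by
  ext a c
  simp [traceLeft, mul_apply, Fintype.sum_prod_type, one_apply, ite_mul, mul_ite]
  rw [Finset.sum_comm]
  simp only [mul_comm]

variable [StarRing R] [DecidableEq U] [DecidableEq V]

lemma traceRight_conj_kronecker (P : Matrix U U R) {Q : Matrix V V R} (hQ : Q * Qᴴ = 1) :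
    traceRight ((P ⊗ₖ Q)ᴴ * ω * (P ⊗ₖ Q)) = Pᴴ * traceRight ω * P := by
  have hsplit : (P ⊗ₖ Q)ᴴ * ω * (P ⊗ₖ Q)
      = (Pᴴ ⊗ₖ 1) * (((1 : Matrix U U R) ⊗ₖ Qᴴ) * (ω * (1 ⊗ₖ Q))) * (P ⊗ₖ 1) := by
    rw [conjTranspose_kronecker, show P ⊗ₖ Q = (1 ⊗ₖ Q) * (P ⊗ₖ 1) by
      rw [← mul_kronecker_mul, mul_one, one_mul], show Pᴴ ⊗ₖ Qᴴ = (Pᴴ ⊗ₖ 1) * (1 ⊗ₖ Qᴴ) by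
      rw [← mul_kronecker_mul, mul_one, one_mul]]
    simp only [Matrix.mul_assoc]
  rw [hsplit, traceRight_mul_kronecker_one, traceRight_kronecker_one_mul,
    traceRight_one_kronecker_mul_comm, Matrix.mul_assoc ω, ← mul_kronecker_mul, mul_one, hQ,
    one_kronecker_one, Matrix.mul_one]

lemma traceLeft_conj_kronecker {P : Matrix U U R} (Q : Matrix V V R) (hP : P * Pᴴ = 1) :
    traceLeft ((P ⊗ₖ Q)ᴴ * ω * (P ⊗ₖ Q)) = Qᴴ * traceLeft ω * Q := by
  have hsplit : (P ⊗ₖ Q)ᴴ * ω * (P ⊗ₖ Q)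
      = (1 ⊗ₖ Qᴴ) * ((Pᴴ ⊗ₖ (1 : Matrix V V R)) * (ω * (P ⊗ₖ 1))) * (1 ⊗ₖ Q) := by
    rw [conjTranspose_kronecker, show P ⊗ₖ Q = (P ⊗ₖ 1) * (1 ⊗ₖ Q) by
      rw [← mul_kronecker_mul, mul_one, one_mul], show Pᴴ ⊗ₖ Qᴴ = (1 ⊗ₖ Qᴴ) * (Pᴴ ⊗ₖ 1) by
      rw [← mul_kronecker_mul, mul_one, one_mul]]
    simp only [Matrix.mul_assoc]
  rw [hsplit, traceLeft_mul_one_kronecker, traceLeft_one_kronecker_mul,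
    traceLeft_kronecker_one_mul_comm, Matrix.mul_assoc ω, ← mul_kronecker_mul, mul_one, hP,
    one_kronecker_one, Matrix.mul_one]

end CommSemiring

def reshape {Q R : Type} (M : Matrix (U × V) Q R) : Matrix V (U × Q) R :=
  of fun v p => M (p.1, v) p.2

section Reshape

variable {Q : Type} (M : Matrix (U × V) Q ℂ)

lemma reshape_mul_conjTranspose [Fintype U] [Fintype Q] :
    M.reshape * M.reshapeᴴ = traceLeft (M * Mᴴ) := by
  ext v v'
  simp [reshape, traceLeft, mul_apply, Fintype.sum_prod_type]

lemma traceLeft_conjTranspose_reshape_mul [Fintype U] [Fintype V] :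
    traceLeft (M.reshapeᴴ * M.reshape) = Mᴴ * M := by
  ext q q'
  simp [reshape, traceLeft, mul_apply, Fintype.sum_prod_type]

lemma traceRight_conjTranspose_reshape_mul [Fintype V] [Fintype Q] :
    traceRight (M.reshapeᴴ * M.reshape) = (traceRight (M * Mᴴ))ᵀ := by
  ext u u'
  simp [reshape, traceRight, mul_apply, mul_comm]
  exact Finset.sum_comm

end Reshape

end Matrix

section BipartiteEntropy

variable {U V : Type} [Fintype U] [Fintype V] {ω : Matrix (U × V) (U × V) ℂ}

lemma IsDensityMatrix.traceRight (hω : IsDensityMatrix ω) : IsDensityMatrix ω.traceRight :=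
  ⟨ω.traceRight_eq_sum_submatrix ▸ posSemidef_sum _ fun _ _ => hω.1.submatrix _,
    ω.trace_traceRight.trans hω.2⟩

lemma IsDensityMatrix.traceLeft (hω : IsDensityMatrix ω) : IsDensityMatrix ω.traceLeft :=
  ⟨ω.traceLeft_eq_sum_submatrix ▸ posSemidef_sum _ fun _ _ => hω.1.submatrix _,
    ω.trace_traceLeft.trans hω.2⟩

variable [DecidableEq U] [DecidableEq V]

-- In the tensor product of eigenbases of the two marginals, the diagonal of `ω` is a probability
-- distribution whose marginals are their spectra.
theorem vnEntropy_le_traceRight_add_traceLeft (hω : IsDensityMatrix ω) :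
    vnEntropy ω ≤ vnEntropy ω.traceRight + vnEntropy ω.traceLeft := by
  have hA := hω.traceRight.1.1
  have hB := hω.traceLeft.1.1
  set P := (hA.eigenvectorUnitary : Matrix U U ℂ)
  set Q := (hB.eigenvectorUnitary : Matrix V V ℂ)
  have hP : P * Pᴴ = 1 := mem_unitaryGroup_iff.mp hA.eigenvectorUnitary.2
  have hQ : Q * Qᴴ = 1 := mem_unitaryGroup_iff.mp hB.eigenvectorUnitary.2
  have hT : (P ⊗ₖ Q) * (P ⊗ₖ Q)ᴴ = 1 := by
    rw [conjTranspose_kronecker, ← mul_kronecker_mul, hP, hQ, one_kronecker_one]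
  set ω' := (P ⊗ₖ Q)ᴴ * ω * (P ⊗ₖ Q)
  have hω' : ω'.PosSemidef := hω.1.conjTranspose_mul_mul_same _
  have hmargA (i : U) : ∑ j, (ω' (i, j) (i, j)).re = hA.eigenvalues i := by
    have h := congrFun (congrFun (traceRight_conj_kronecker ω P hQ) i) i
    rw [hA.conjTranspose_eigenvectorUnitary_mul_mul, diagonal_apply_eq] at h
    simpa [traceRight] using congrArg Complex.re h
  have hmargB (j : V) : ∑ i, (ω' (i, j) (i, j)).re = hB.eigenvalues j := by
    have h := congrFun (congrFun (traceLeft_conj_kronecker ω Q hP) j) j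
    rw [hB.conjTranspose_eigenvectorUnitary_mul_mul, diagonal_apply_eq] at h
    simpa [traceLeft] using congrArg Complex.re h
  have htrace : ∑ l, (ω' l l).re = 1 := by
    have h : ω'.trace = 1 := by rw [trace_mul_cycle, hT, Matrix.one_mul, hω.2]
    simpa [trace] using congrArg Complex.re h
  have hdiag_nonneg (l : U × V) : 0 ≤ (ω' l l).re := by
    simpa using (Complex.le_def.mp hω'.diag_nonneg).1
  calc vnEntropy ω = vnEntropy ω' := (vnEntropy_conjTranspose_mul_mul hω.1.1 hT).symm
    _ ≤ (∑ l, negMulLog (ω' l l).re) / log 2 := vnEntropy_le_sum_negMulLog_diag hω'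
    _ ≤ (∑ i, negMulLog (∑ j, (ω' (i, j) (i, j)).re)
          + ∑ j, negMulLog (∑ i, (ω' (i, j) (i, j)).re)) / log 2 := by
        gcongr
        exact sum_negMulLog_le_add_marginals hdiag_nonneg htrace
    _ = vnEntropy ω.traceRight + vnEntropy ω.traceLeft := by
        simp only [hmargA, hmargB, vnEntropy_eq_sum_negMulLog hA, vnEntropy_eq_sum_negMulLog hB,
          add_div]

-- Purification: if `ω = M * Mᴴ`, the state `M.reshapeᴴ * M.reshape` on `U × (U × V)` has the
-- spectrum of `ω.traceLeft`, and its marginals are `ω.traceRightᵀ` and `Mᴴ * M`, which has the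
-- spectrum of `ω`.
open scoped MatrixOrder in
theorem vnEntropy_traceLeft_le_add_traceRight (hω : IsDensityMatrix ω) :
    vnEntropy ω.traceLeft ≤ vnEntropy ω + vnEntropy ω.traceRight := by
  obtain ⟨B, hB⟩ := CStarAlgebra.nonneg_iff_eq_star_mul_self.mp hω.1.nonneg
  set M := Bᴴ
  have hM : ω = M * Mᴴ := by rw [hB, conjTranspose_conjTranspose]; rfl
  have hR : IsDensityMatrix (M.reshapeᴴ * M.reshape) :=
    ⟨posSemidef_conjTranspose_mul_self _, by
      rw [trace_mul_comm, reshape_mul_conjTranspose, trace_traceLeft, ← hM, hω.2]⟩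
  calc vnEntropy ω.traceLeft = vnEntropy (M.reshapeᴴ * M.reshape) := by
        rw [hM, ← reshape_mul_conjTranspose, vnEntropy_mul_conjTranspose_comm]
    _ ≤ vnEntropy (traceRight (M * Mᴴ))ᵀ + vnEntropy (Mᴴ * M) := by
        rw [← traceRight_conjTranspose_reshape_mul, ← traceLeft_conjTranspose_reshape_mul]
        exact vnEntropy_le_traceRight_add_traceLeft hR
    _ = vnEntropy ω + vnEntropy ω.traceRight := by
        rw [vnEntropy_transpose (hM ▸ hω.traceRight.1.1), ← vnEntropy_mul_conjTranspose_comm,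
          ← hM, add_comm]

end BipartiteEntropy

section Multipartite

variable {ι : Type} [Fintype ι] [DecidableEq ι] {τ : ι → Type} [∀ i, Fintype (τ i)]
  {E : Type} [Fintype E] (η : Matrix ((∀ i, τ i) × E) ((∀ i, τ i) × E) ℂ)

def splitEquiv (S : Finset ι) :
    ((∀ i, τ i) × E) ≃ ((∀ i : {j // j ∈ S}, τ i.1) × E) × (∀ i : {j // j ∉ S}, τ i.1) :=
  (Equiv.prodCongr (Equiv.piEquivPiSubtypeProd (· ∈ S) τ) (Equiv.refl E)).trans
    ((Equiv.prodAssoc _ _ _).trans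
      ((Equiv.prodCongr (Equiv.refl _) (Equiv.prodComm _ _)).trans (Equiv.prodAssoc _ _ _).symm))

lemma reducedE_eq_traceRight (S : Finset ι) :
    reducedE η S = traceRight (reindex (splitEquiv S) (splitEquiv S) η) :=
  rfl

lemma traceLeft_reducedE (S : Finset ι) :
    traceLeft (reducedE η S) = traceLeft η := by
  ext e e'
  simp only [traceLeft, reducedE, of_apply]
  rw [← Fintype.sum_prod_type']
  exact Fintype.sum_equiv (Equiv.piEquivPiSubtypeProd (· ∈ S) τ).symm _ _ fun _ => rfl

variable {η}

lemma IsDensityMatrix.reducedE (hη : IsDensityMatrix η) (S : Finset ι) :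
    IsDensityMatrix (reducedE η S) :=
  reducedE_eq_traceRight η S ▸ (hη.reindex (splitEquiv S)).traceRight

variable [∀ i, DecidableEq (τ i)] [DecidableEq E]

lemma abs_entSE_sub_vnEntropy_traceLeft_le (hη : IsDensityMatrix η) (S : Finset ι) :
    |entSE η S - vnEntropy η.traceLeft| ≤ logb 2 (Fintype.card (∀ i : {j // j ∈ S}, τ i.1)) := by
  have hS := hη.reducedE S
  have hsub := vnEntropy_le_traceRight_add_traceLeft hS
  have harakiLieb := vnEntropy_traceLeft_le_add_traceRight hS
  have hcard := vnEntropy_le_logb_card hS.traceRight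
  rw [traceLeft_reducedE] at hsub harakiLieb
  rw [entSE, abs_sub_le_iff]
  constructor <;> linarith

lemma entSE_empty (hη : IsDensityMatrix η) : entSE η ∅ = vnEntropy η.traceLeft := by
  have h := abs_entSE_sub_vnEntropy_traceLeft_le hη ∅
  simp only [Fintype.card_pi, Finset.univ_eq_empty, Finset.prod_empty, Nat.cast_one,
    logb_one] at h
  linarith [abs_le.mp h]

theorem neg_le_condMI (hη : IsDensityMatrix η) :
    -(∑ i, logb 2 (Fintype.card (∀ j : {k // k ∈ ({i} : Finset ι)}, τ j.1))
      + logb 2 (Fintype.card (∀ j : {k // k ∈ (Finset.univ : Finset ι)}, τ j.1)))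
      ≤ condMI η := by
  have hsingle (i : ι) := (abs_le.mp (abs_entSE_sub_vnEntropy_traceLeft_le hη {i})).1
  have huniv := (abs_le.mp (abs_entSE_sub_vnEntropy_traceLeft_le hη Finset.univ)).2
  have hsum := Finset.sum_le_sum fun i (_ : i ∈ Finset.univ) => hsingle i
  simp only [Finset.sum_neg_distrib, Finset.sum_sub_distrib, Finset.sum_const, Finset.card_univ,
    nsmul_eq_mul] at hsum
  rw [condMI, entSE_empty hη]
  linarith

lemma condMI_reindex_env {F : Type} [Fintype F] [DecidableEq F] (e : E ≃ F)
    (hη : IsDensityMatrix η) :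
    condMI (reindex ((Equiv.refl _).prodCongr e) ((Equiv.refl _).prodCongr e) η) = condMI η := by
  have hS (S : Finset ι) :
      entSE (reindex ((Equiv.refl _).prodCongr e) ((Equiv.refl _).prodCongr e) η) S = entSE η S :=
    vnEntropy_reindex (hη.reducedE S).1.1 ((Equiv.refl _).prodCongr e)
  simp only [condMI, hS]

end Multipartite

lemma ptraceE_reindex_env {ι : Type} {τ : ι → Type} {E F : Type} [Fintype E] [Fintype F]
    (e : E ≃ F) (η : Matrix ((∀ i, τ i) × E) ((∀ i, τ i) × E) ℂ) :
    ptraceE (reindex ((Equiv.refl _).prodCongr e) ((Equiv.refl _).prodCongr e) η) = ptraceE η := by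
  ext w w'
  exact Fintype.sum_equiv e.symm _ _ fun _ => rfl

section ProductExtension

variable {ι : Type} {τ₁ τ₂ : ι → Type} {E₁ E₂ : Type}

def zipEquiv (τ₁ τ₂ : ι → Type) (E₁ E₂ : Type) :
    ((∀ i, τ₁ i) × E₁) × ((∀ i, τ₂ i) × E₂) ≃ (∀ i, τ₁ i × τ₂ i) × (E₁ × E₂) :=
  (Equiv.prodProdProdComm _ _ _ _).trans
    (Equiv.prodCongr (Equiv.arrowProdEquivProdArrow ι τ₁ τ₂).symm (Equiv.refl _))

noncomputable def prodExt (η₁ : Matrix ((∀ i, τ₁ i) × E₁) ((∀ i, τ₁ i) × E₁) ℂ)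
    (η₂ : Matrix ((∀ i, τ₂ i) × E₂) ((∀ i, τ₂ i) × E₂) ℂ) :
    Matrix ((∀ i, τ₁ i × τ₂ i) × (E₁ × E₂)) ((∀ i, τ₁ i × τ₂ i) × (E₁ × E₂)) ℂ :=
  reindex (zipEquiv τ₁ τ₂ E₁ E₂) (zipEquiv τ₁ τ₂ E₁ E₂) (η₁ ⊗ₖ η₂)

variable [Fintype ι] [DecidableEq ι] [∀ i, Fintype (τ₁ i)] [∀ i, Fintype (τ₂ i)]
  [Fintype E₁] [Fintype E₂] {η₁ : Matrix ((∀ i, τ₁ i) × E₁) ((∀ i, τ₁ i) × E₁) ℂ}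
  {η₂ : Matrix ((∀ i, τ₂ i) × E₂) ((∀ i, τ₂ i) × E₂) ℂ}

lemma IsDensityMatrix.prodExt (h₁ : IsDensityMatrix η₁) (h₂ : IsDensityMatrix η₂) :
    IsDensityMatrix (prodExt η₁ η₂) :=
  (h₁.kronecker h₂).reindex _

lemma reducedE_prodExt (S : Finset ι) :
    reducedE (prodExt η₁ η₂) S
      = reindex (zipEquiv _ _ E₁ E₂) (zipEquiv _ _ E₁ E₂) (reducedE η₁ S ⊗ₖ reducedE η₂ S) := by
  ext ⟨x, e⟩ ⟨x', e'⟩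
  simp only [reducedE, prodExt, reindex_apply, submatrix_apply, kroneckerMap_apply, of_apply,
    Finset.sum_mul_sum]
  rw [← Fintype.sum_prod_type']
  exact Fintype.sum_equiv (Equiv.arrowProdEquivProdArrow _ _ _) _ _ fun z => by
    simp [zipEquiv, apply_dite Prod.fst, apply_dite Prod.snd]

variable [∀ i, DecidableEq (τ₁ i)] [∀ i, DecidableEq (τ₂ i)] [DecidableEq E₁] [DecidableEq E₂]

lemma entSE_prodExt (h₁ : IsDensityMatrix η₁) (h₂ : IsDensityMatrix η₂) (S : Finset ι) :
    entSE (prodExt η₁ η₂) S = entSE η₁ S + entSE η₂ S := by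
  have hS := (h₁.reducedE S).kronecker (h₂.reducedE S)
  rw [entSE, reducedE_prodExt, vnEntropy_reindex hS.1.1,
    vnEntropy_kronecker (h₁.reducedE S) (h₂.reducedE S), entSE, entSE]

lemma condMI_prodExt (h₁ : IsDensityMatrix η₁) (h₂ : IsDensityMatrix η₂) :
    condMI (prodExt η₁ η₂) = condMI η₁ + condMI η₂ := by
  simp only [condMI, entSE_prodExt h₁ h₂, Finset.sum_add_distrib]
  ring

end ProductExtension

lemma ptraceE_prodExt {m : ℕ} {dX dY : Fin m → ℕ} {E₁ E₂ : Type} [Fintype E₁] [Fintype E₂]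
    (η₁ : Matrix ((∀ i, Fin (dX i)) × E₁) ((∀ i, Fin (dX i)) × E₁) ℂ)
    (η₂ : Matrix ((∀ i, Fin (dY i)) × E₂) ((∀ i, Fin (dY i)) × E₂) ℂ) :
    ptraceE (prodExt η₁ η₂) = pairedProd (ptraceE η₁) (ptraceE η₂) := by
  ext w w'
  simp [ptraceE, pairedProd, prodExt, zipEquiv, Finset.sum_mul_sum, Fintype.sum_prod_type]

open scoped Pointwise in
lemma csInf_le_csInf_add_csInf {A B C : Set ℝ} (hA : A.Nonempty) (hA' : BddBelow A)
    (hB : B.Nonempty) (hB' : BddBelow B) (hC : BddBelow C) (hABC : ∀ a ∈ A, ∀ b ∈ B, a + b ∈ C) :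
    sInf C ≤ sInf A + sInf B := by
  rw [← csInf_add hA hA' hB hB']
  exact csInf_le_csInf hC (hA.add hB) fun _ ⟨a, ha, b, hb, hab⟩ => hab ▸ hABC a ha b hb

section SquashedEntanglement

variable {ι : Type} [Fintype ι] [DecidableEq ι] {τ : ι → Type} [∀ i, Fintype (τ i)]
  [∀ i, DecidableEq (τ i)]

def extensionValues (ρ : Matrix (∀ i, τ i) (∀ i, τ i) ℂ) : Set ℝ :=
  {x : ℝ | ∃ dE : ℕ, 1 ≤ dE ∧
    ∃ ρe : Matrix ((∀ i, τ i) × Fin dE) ((∀ i, τ i) × Fin dE) ℂ,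
      IsDensityMatrix ρe ∧ ptraceE ρe = ρ ∧ x = condMI ρe}

lemma Esq_eq_half_sInf (ρ : Matrix (∀ i, τ i) (∀ i, τ i) ℂ) :
    Esq ρ = 1 / 2 * sInf (extensionValues ρ) :=
  rfl

lemma extensionValues_nonempty {ρ : Matrix (∀ i, τ i) (∀ i, τ i) ℂ} (hρ : IsDensityMatrix ρ) :
    (extensionValues ρ).Nonempty := by
  let e := (Equiv.prodUnique (∀ i, τ i) (Fin 1)).symm
  exact ⟨_, 1, le_rfl, reindex e e ρ, hρ.reindex e, by ext; simp [ptraceE, e], rfl⟩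

lemma bddBelow_extensionValues (ρ : Matrix (∀ i, τ i) (∀ i, τ i) ℂ) :
    BddBelow (extensionValues ρ) :=
  ⟨_, by rintro x ⟨dE, -, ρe, hρe, -, rfl⟩; exact neg_le_condMI hρe⟩

end SquashedEntanglement

lemma add_mem_extensionValues_pairedProd {m : ℕ} {dX dY : Fin m → ℕ}
    {ρ : Matrix (∀ i, Fin (dX i)) (∀ i, Fin (dX i)) ℂ}
    {σ : Matrix (∀ i, Fin (dY i)) (∀ i, Fin (dY i)) ℂ} {a b : ℝ} (ha : a ∈ extensionValues ρ)
    (hb : b ∈ extensionValues σ) : a + b ∈ extensionValues (pairedProd ρ σ) := by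
  obtain ⟨d₁, hd₁, η₁, h₁, rfl, rfl⟩ := ha
  obtain ⟨d₂, hd₂, η₂, h₂, rfl, rfl⟩ := hb
  let e := (Equiv.refl (∀ i, Fin (dX i) × Fin (dY i))).prodCongr
    (finProdFinEquiv (m := d₁) (n := d₂))
  refine ⟨d₁ * d₂, Nat.one_le_iff_ne_zero.mpr (by positivity), reindex e e (prodExt η₁ η₂),
    (h₁.prodExt h₂).reindex e, ?_, ?_⟩
  · rw [ptraceE_reindex_env, ptraceE_prodExt]
  · rw [condMI_reindex_env _ (h₁.prodExt h₂), condMI_prodExt h₁ h₂]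

/-- Subadditivity of the multiparty squashed entanglement on tensor products:
E_sq(X_1Y_1;…;X_mY_m)_{ρ⊗σ} ≤ E_sq(X_1;…;X_m)_ρ + E_sq(Y_1;…;Y_m)_σ. -/
theorem Esq_subadditive {m : ℕ} {dX dY : Fin m → ℕ}
    (ρ : Matrix (∀ i, Fin (dX i)) (∀ i, Fin (dX i)) ℂ)
    (σ : Matrix (∀ i, Fin (dY i)) (∀ i, Fin (dY i)) ℂ)
    (hρ : IsDensityMatrix ρ) (hσ : IsDensityMatrix σ) :
    Esq (pairedProd ρ σ) ≤ Esq ρ + Esq σ := by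
  have h := csInf_le_csInf_add_csInf (extensionValues_nonempty hρ) (bddBelow_extensionValues ρ)
    (extensionValues_nonempty hσ) (bddBelow_extensionValues σ) (bddBelow_extensionValues _)
    fun _ ha _ hb => add_mem_extensionValues_pairedProd ha hb
  rw [Esq_eq_half_sInf, Esq_eq_half_sInf, Esq_eq_half_sInf]
  linarith
end

section
/- Let |σ⟩ be a unit vector in ℂ^{d_A}⊗ℂ^{d_B}, let σ^A and σ^B be the reduced density matrices of |σ⟩⟨σ| on the two factors, and let λ_1 ≥ λ_2 ≥ … be the eigenvalues of σ^A (the squared Schmidt coefficients of |σ⟩). Then ⟨σ| (σ^A ⊗ σ^B) |σ⟩ = ∑_i λ_i^3. Consequently, if λ_1 ≥ 1 − ε for some ε ∈ [0,1], then ⟨σ| (σ^A ⊗ σ^B) |σ⟩ ≥ (1−ε)^3 ≥ 1 − 3ε, i.e., the pure state is within fidelity 1 − 3ε of the tensor product of its marginals. -/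
open scoped BigOperators ComplexOrder

/-- Partial trace over the second factor. -/
noncomputable def ptraceSnd {α β : Type} [Fintype β]
    (ρ : Matrix (α × β) (α × β) ℂ) : Matrix α α ℂ :=
  Matrix.of fun x y => ∑ z : β, ρ (x, z) (y, z)

/-- Partial trace over the first factor. -/
noncomputable def ptraceFst {α β : Type} [Fintype α]
    (ρ : Matrix (α × β) (α × β) ℂ) : Matrix β β ℂ :=
  Matrix.of fun x y => ∑ z : α, ρ (z, x) (z, y)

open Matrix

/-- The bipartite vector `σv` viewed as a `dA × dB` matrix. -/
noncomputable def vecMat {dA dB : ℕ} (σv : Fin dA × Fin dB → ℂ) :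
    Matrix (Fin dA) (Fin dB) ℂ := Matrix.of fun a b => σv (a, b)

lemma ptraceSnd_pureDM_eq {dA dB : ℕ} (σv : Fin dA × Fin dB → ℂ) :
    ptraceSnd (pureDM σv) = vecMat σv * (vecMat σv)ᴴ := by
  ext x y
  simp [ptraceSnd, pureDM, vecMat, Matrix.mul_apply, Matrix.conjTranspose_apply]

lemma ptraceFst_pureDM_eq {dA dB : ℕ} (σv : Fin dA × Fin dB → ℂ) :
    ptraceFst (pureDM σv) = ((vecMat σv)ᴴ * vecMat σv)ᵀ := by
  ext x y
  simp [ptraceFst, pureDM, vecMat, Matrix.mul_apply, Matrix.conjTranspose_apply, mul_comm]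

lemma sum_eq_trace_aux {dA dB : ℕ} (σv : Fin dA × Fin dB → ℂ) :
    (∑ x : Fin dA × Fin dB, ∑ y : Fin dA × Fin dB,
        (starRingEnd ℂ) (σv x) *
          (ptraceSnd (pureDM σv) x.1 y.1 * ptraceFst (pureDM σv) x.2 y.2) * σv y)
    = (((vecMat σv)ᴴ * ptraceSnd (pureDM σv)) *
        (vecMat σv * (ptraceFst (pureDM σv))ᵀ)).trace := by
  rw [Matrix.trace]
  simp only [Matrix.diag_apply, Matrix.mul_apply, Fintype.sum_prod_type,
    Matrix.conjTranspose_apply, Matrix.transpose_apply, vecMat, Matrix.of_apply,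
    Finset.sum_mul, Finset.mul_sum]
  rw [Finset.sum_comm]
  refine Finset.sum_congr rfl fun x2 _ => ?_
  rw [Finset.sum_comm]
  refine Finset.sum_congr rfl fun y1 _ => ?_
  rw [Finset.sum_comm]
  refine Finset.sum_congr rfl fun y2 _ => Finset.sum_congr rfl fun x1 _ => ?_
  simp only [starRingEnd_apply]
  ring

lemma sum_eq_trace_cube {dA dB : ℕ} (σv : Fin dA × Fin dB → ℂ) :
    (∑ x : Fin dA × Fin dB, ∑ y : Fin dA × Fin dB,
        (starRingEnd ℂ) (σv x) *
          (ptraceSnd (pureDM σv) x.1 y.1 * ptraceFst (pureDM σv) x.2 y.2) * σv y)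
    = (ptraceSnd (pureDM σv) * ptraceSnd (pureDM σv) * ptraceSnd (pureDM σv)).trace := by
  rw [sum_eq_trace_aux, ptraceSnd_pureDM_eq, ptraceFst_pureDM_eq, Matrix.transpose_transpose]
  set M := vecMat σv
  have e1 : (Mᴴ * (M * Mᴴ)) * (M * (Mᴴ * M)) = Mᴴ * (M * (Mᴴ * (M * (Mᴴ * M)))) := by
    simp only [Matrix.mul_assoc]
  rw [e1, Matrix.trace_mul_comm]
  simp only [Matrix.mul_assoc]

lemma trace_cube_eq {n : ℕ} (A : Matrix (Fin n) (Fin n) ℂ) (hA : A.IsHermitian) :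
    (A * A * A).trace = ((∑ i, (hA.eigenvalues i) ^ 3 : ℝ) : ℂ) := by
  set U : Matrix (Fin n) (Fin n) ℂ := (hA.eigenvectorUnitary : Matrix (Fin n) (Fin n) ℂ)
  set D : Matrix (Fin n) (Fin n) ℂ := Matrix.diagonal (RCLike.ofReal ∘ hA.eigenvalues)
  have hU : star U * U = 1 := Matrix.mem_unitaryGroup_iff'.mp hA.eigenvectorUnitary.2
  have key : ∀ X : Matrix (Fin n) (Fin n) ℂ, star U * (U * X) = X := fun X => by
    rw [← Matrix.mul_assoc, hU, Matrix.one_mul]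
  have h : A = U * D * star U := hA.spectral_theorem
  have h3 : A * A * A = U * (D * D * D) * star U := by
    rw [h]; simp only [Matrix.mul_assoc, key]
  rw [h3, Matrix.trace_mul_cycle, ← Matrix.mul_assoc, hU, Matrix.one_mul]
  simp [D, Matrix.trace, Matrix.diagonal_mul_diagonal, pow_succ]

/-- For a bipartite unit vector |σ⟩ with reduced density matrices σ^A, σ^B and squared
Schmidt coefficients λ_i (the eigenvalues of σ^A), one has
⟨σ|(σ^A ⊗ σ^B)|σ⟩ = ∑_i λ_i³; consequently, if some eigenvalue (necessarily the largest)
satisfies λ ≥ 1 − ε with ε ∈ [0,1], then ⟨σ|(σ^A ⊗ σ^B)|σ⟩ ≥ (1−ε)³ ≥ 1 − 3ε. -/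
theorem pure_state_decoupling_fidelity {dA dB : ℕ}
    (σv : Fin dA × Fin dB → ℂ)
    (hunit : ∑ x, Complex.normSq (σv x) = 1)
    (hA : (ptraceSnd (pureDM σv)).IsHermitian) :
    (∑ x : Fin dA × Fin dB, ∑ y : Fin dA × Fin dB,
        (starRingEnd ℂ) (σv x) *
          (ptraceSnd (pureDM σv) x.1 y.1 * ptraceFst (pureDM σv) x.2 y.2) * σv y)
      = ((∑ i, (hA.eigenvalues i) ^ 3 : ℝ) : ℂ) ∧
    ∀ ε : ℝ, 0 ≤ ε → ε ≤ 1 → (∃ i, 1 - ε ≤ hA.eigenvalues i) →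
      (1 - ε) ^ 3 ≤ (∑ x : Fin dA × Fin dB, ∑ y : Fin dA × Fin dB,
          (starRingEnd ℂ) (σv x) *
            (ptraceSnd (pureDM σv) x.1 y.1 * ptraceFst (pureDM σv) x.2 y.2) * σv y).re ∧
      1 - 3 * ε ≤ (∑ x : Fin dA × Fin dB, ∑ y : Fin dA × Fin dB,
          (starRingEnd ℂ) (σv x) *
            (ptraceSnd (pureDM σv) x.1 y.1 * ptraceFst (pureDM σv) x.2 y.2) * σv y).re := by
  have h1 : (∑ x : Fin dA × Fin dB, ∑ y : Fin dA × Fin dB,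
        (starRingEnd ℂ) (σv x) *
          (ptraceSnd (pureDM σv) x.1 y.1 * ptraceFst (pureDM σv) x.2 y.2) * σv y)
      = ((∑ i, (hA.eigenvalues i) ^ 3 : ℝ) : ℂ) := by
    rw [sum_eq_trace_cube, trace_cube_eq _ hA]
  refine ⟨h1, fun ε hε0 hε1 ⟨j, hj⟩ => ?_⟩
  have hPSD : (ptraceSnd (pureDM σv)).PosSemidef := by
    rw [ptraceSnd_pureDM_eq]
    exact Matrix.posSemidef_self_mul_conjTranspose _
  have hnn : ∀ i, 0 ≤ hA.eigenvalues i := fun i => hPSD.eigenvalues_nonneg i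
  have hre : (∑ x : Fin dA × Fin dB, ∑ y : Fin dA × Fin dB,
        (starRingEnd ℂ) (σv x) *
          (ptraceSnd (pureDM σv) x.1 y.1 * ptraceFst (pureDM σv) x.2 y.2) * σv y).re
      = ∑ i, (hA.eigenvalues i) ^ 3 := by rw [h1, Complex.ofReal_re]
  have hsum : (1 - ε) ^ 3 ≤ ∑ i, (hA.eigenvalues i) ^ 3 := by
    calc (1 - ε) ^ 3 ≤ (hA.eigenvalues j) ^ 3 :=
          pow_le_pow_left₀ (by linarith) hj 3
      _ ≤ ∑ i, (hA.eigenvalues i) ^ 3 :=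
          Finset.single_le_sum (fun i _ => pow_nonneg (hnn i) 3) (Finset.mem_univ j)
  have hcube : 1 - 3 * ε ≤ (1 - ε) ^ 3 := by nlinarith [sq_nonneg ε]
  rw [hre]
  exact ⟨hsum, le_trans hcube hsum⟩
end
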